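/- Let P be a definite program and Q a query such that either (a) the underlying language has a non-constant function symbol not occurring in P, or (b) for each atom A of Q with k distinct variables, the language has at least k constants occurring in neither P nor A. Then M_P ⊨ Q if and only if P ⊨ Q. -/

import Mathlib

/-- First-order terms over function symbols `F` (each use records the number of
arguments), with variables indexed by `ℕ`. -/
inductive Tm (F : Type) : Type
  | var : ℕ → Tm F
  | app : F → (k : ℕ) → (Fin k → Tm F) → Tm F

namespace Tm

/-- Apply a substitution to a term. -/
def subst (σ : ℕ → Tm F) : Tm F → Tm F
  | var n => σ n
  | app f k ts => app f k (fun i => (ts i).subst σ)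

/-- Variables occurring in a term. -/
def vars : Tm F → Set ℕ
  | var n => {n}
  | app _ _ ts => ⋃ i, (ts i).vars

/-- Function symbols occurring in a term. -/
def symbols : Tm F → Set F
  | var _ => ∅
  | app f _ ts => {f} ∪ ⋃ i, (ts i).symbols

/-- Subterms of a term (including the term itself). -/
def subterms : Tm F → Set (Tm F)
  | var n => {var n}
  | app f k ts => {app f k ts} ∪ ⋃ i, (ts i).subterms

/-- The head (outermost) function symbol, if any. -/
def head? : Tm F → Option F
  | var _ => none
  | app f _ _ => some f

def IsVar : Tm F → Prop
  | var _ => True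
  | app _ _ _ => False

def isGround (t : Tm F) : Prop := t.vars = ∅

/-- Well-formedness w.r.t. an arity assignment: every function symbol is used
with exactly its arity. -/
def WF (ar : F → ℕ) : Tm F → Prop
  | var _ => True
  | app f k ts => k = ar f ∧ ∀ i, (ts i).WF ar

end Tm

/-- A term is an alien w.r.t. a set `S` of function symbols if it is a
non-variable term whose head symbol is not in `S`. -/
def IsAlien (S : Set F) (t : Tm F) : Prop :=
  ∃ f, t.head? = some f ∧ f ∉ S

/-- The substitution `{X/u}`. -/
def sub1 (X : ℕ) (u : Tm F) : ℕ → Tm F := fun n => if n = X then u else .var n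

/-- `σ` is the substitution `{V 0/t 0, …, V (k-1)/t (k-1)}`. -/
def FiniteSub (σ : ℕ → Tm F) (V : Fin k → ℕ) (t : Fin k → Tm F) : Prop :=
  (∀ i, σ (V i) = t i) ∧ ∀ n, (∀ i, V i ≠ n) → σ n = Tm.var n

/-- An atom: a predicate symbol applied to a list of terms. -/
structure Atom (F Pr : Type) where
  pred : Pr
  args : List (Tm F)

namespace Atom
def subst (σ : ℕ → Tm F) (A : Atom F Pr) : Atom F Pr := ⟨A.pred, A.args.map (Tm.subst σ)⟩
def vars (A : Atom F Pr) : Set ℕ := { n | ∃ t ∈ A.args, n ∈ t.vars }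
def symbols (A : Atom F Pr) : Set F := { f | ∃ t ∈ A.args, f ∈ t.symbols }
def isGround (A : Atom F Pr) : Prop := A.vars = ∅
def WFA (ar : F → ℕ) (A : Atom F Pr) : Prop := ∀ t ∈ A.args, t.WF ar
end Atom

/-- A definite clause `head ← body`. -/
structure Clause (F Pr : Type) where
  head : Atom F Pr
  body : List (Atom F Pr)

/-- A definite program: a set of definite clauses. -/
abbrev Program (F Pr : Type) := Set (Clause F Pr)

/-- A query: a conjunction (list) of atoms. -/
abbrev Query (F Pr : Type) := List (Atom F Pr)

def Clause.subst (σ : ℕ → Tm F) (C : Clause F Pr) : Clause F Pr :=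
  ⟨C.head.subst σ, C.body.map (Atom.subst σ)⟩

def Clause.symbols (C : Clause F Pr) : Set F :=
  C.head.symbols ∪ { f | ∃ A ∈ C.body, f ∈ A.symbols }

def Clause.vars (C : Clause F Pr) : Set ℕ :=
  C.head.vars ∪ { n | ∃ A ∈ C.body, n ∈ A.vars }

def Clause.WFC (ar : F → ℕ) (C : Clause F Pr) : Prop :=
  C.head.WFA ar ∧ ∀ A ∈ C.body, A.WFA ar

def progSymbols (Pg : Program F Pr) : Set F := { f | ∃ C ∈ Pg, f ∈ C.symbols }

def ProgramWF (ar : F → ℕ) (Pg : Program F Pr) : Prop := ∀ C ∈ Pg, C.WFC ar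

def querySymbols (Q : Query F Pr) : Set F := { f | ∃ A ∈ Q, f ∈ A.symbols }

def queryVars (Q : Query F Pr) : Set ℕ := { n | ∃ A ∈ Q, n ∈ A.vars }

def QueryWF (ar : F → ℕ) (Q : Query F Pr) : Prop := ∀ A ∈ Q, A.WFA ar

def substQuery (σ : ℕ → Tm F) (Q : Query F Pr) : Query F Pr := Q.map (Atom.subst σ)

/-- A first-order interpretation (for a language without equality). -/
structure Interp (F Pr : Type) where
  dom : Type
  nonempty : Nonempty dom
  fn : F → (k : ℕ) → (Fin k → dom) → dom
  rel : Pr → List dom → Prop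

namespace Interp

def eval (I : Interp F Pr) (ρ : ℕ → I.dom) : Tm F → I.dom
  | .var n => ρ n
  | .app f k ts => I.fn f k (fun i => I.eval ρ (ts i))

def holdsAtom (I : Interp F Pr) (ρ : ℕ → I.dom) (A : Atom F Pr) : Prop :=
  I.rel A.pred (A.args.map (I.eval ρ))

def holdsClause (I : Interp F Pr) (C : Clause F Pr) : Prop :=
  ∀ ρ, (∀ B ∈ C.body, I.holdsAtom ρ B) → I.holdsAtom ρ C.head

def isModel (I : Interp F Pr) (Pg : Program F Pr) : Prop := ∀ C ∈ Pg, I.holdsClause C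

end Interp

/-- `P ⊨ Q`: logical consequence of the universal closure of the query. -/
def Entails (Pg : Program F Pr) (Q : Query F Pr) : Prop :=
  ∀ I : Interp F Pr, I.isModel Pg → ∀ ρ, ∀ A ∈ Q, I.holdsAtom ρ A

/-- A substitution mapping every variable to a ground term. -/
def GroundSub (σ : ℕ → Tm F) : Prop := ∀ n, (σ n).isGround

/-- A grounding substitution by well-formed ground terms
(terms of the Herbrand universe for arities `ar`). -/
def WFGroundSub (ar : F → ℕ) (σ : ℕ → Tm F) : Prop :=
  ∀ n, (σ n).isGround ∧ (σ n).WF ar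

/-- A Herbrand interpretation (set of ground atoms) that is a model of `Pg`. -/
def IsHerbrandModel (Pg : Program F Pr) (S : Set (Atom F Pr)) : Prop :=
  ∀ C ∈ Pg, ∀ σ : ℕ → Tm F, GroundSub σ →
    (∀ B ∈ C.body, B.subst σ ∈ S) → C.head.subst σ ∈ S

/-- The least Herbrand model `M_P`. -/
def leastHerbrand (Pg : Program F Pr) : Set (Atom F Pr) :=
  ⋂₀ { S | IsHerbrandModel Pg S }

/-- `M_P ⊨ Q`: every ground instance of `Q` is true in the least Herbrand model. -/
def HoldsInM (Pg : Program F Pr) (Q : Query F Pr) : Prop :=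
  ∀ σ : ℕ → Tm F, GroundSub σ → ∀ A ∈ Q, A.subst σ ∈ leastHerbrand Pg

/-- A Herbrand model over the Herbrand universe of well-formed ground terms. -/
def IsHerbrandModelWF (ar : F → ℕ) (Pg : Program F Pr) (S : Set (Atom F Pr)) : Prop :=
  ∀ C ∈ Pg, ∀ σ : ℕ → Tm F, WFGroundSub ar σ →
    (∀ B ∈ C.body, B.subst σ ∈ S) → C.head.subst σ ∈ S

/-- The least Herbrand model `M_P` (over well-formed ground terms). -/
def leastHerbrandWF (ar : F → ℕ) (Pg : Program F Pr) : Set (Atom F Pr) :=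
  ⋂₀ { S | IsHerbrandModelWF ar Pg S }

/-- `M_P ⊨ Q`, where ground instances are taken over the Herbrand universe of
well-formed ground terms. -/
def HoldsInMWF (ar : F → ℕ) (Pg : Program F Pr) (Q : Query F Pr) : Prop :=
  ∀ σ : ℕ → Tm F, WFGroundSub ar σ → ∀ A ∈ Q, A.subst σ ∈ leastHerbrandWF ar Pg

/-- The query contains no aliens w.r.t. `S` (no subterm of it is an alien). -/
def QueryNoAliens (S : Set F) (Q : Query F Pr) : Prop :=
  ∀ A ∈ Q, ∀ t ∈ A.args, ∀ s ∈ t.subterms, ¬ IsAlien S s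

/-- `Q'` is `Q` generalized for `S`: `Q'` contains no aliens w.r.t. `S` and `Q` is
obtained from `Q'` by a substitution (with domain among the variables of `Q'`)
mapping distinct variables to pairwise distinct aliens w.r.t. `S`. -/
def IsGenQuery (S : Set F) (Q' Q : Query F Pr) : Prop :=
  QueryNoAliens S Q' ∧
  ∃ (k : ℕ) (V : Fin k → ℕ) (t : Fin k → Tm F) (σ : ℕ → Tm F),
    Function.Injective V ∧ Function.Injective t ∧ (∀ i, IsAlien S (t i)) ∧
    FiniteSub σ V t ∧ (∀ i, V i ∈ queryVars Q') ∧ Q = substQuery σ Q'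

section Stmt10Helpers

open Classical

variable {F Pr : Type}

namespace Tm

lemma ground_app_iff {f : F} {k : ℕ} {ts : Fin k → Tm F} :
    (Tm.app f k ts).isGround ↔ ∀ i, (ts i).isGround := by
  simp [Tm.isGround, Tm.vars, Set.iUnion_eq_empty]

lemma subst_isGround {σ : ℕ → Tm F} (hσ : ∀ n, (σ n).isGround) :
    ∀ t : Tm F, (t.subst σ).isGround
  | var n => hσ n
  | app f k ts => by
      rw [Tm.subst, ground_app_iff]
      exact fun i => subst_isGround hσ (ts i)

/-- depth of a term -/
def depth : Tm F → ℕ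
  | var _ => 0
  | app _ _ ts => (Finset.univ.sup fun i => (ts i).depth) + 1

lemma depth_lt {f : F} {k : ℕ} {ts : Fin k → Tm F} (i : Fin k) :
    (ts i).depth < (Tm.app f k ts).depth := by
  have h : (ts i).depth ≤ Finset.univ.sup fun j => (ts j).depth :=
    Finset.le_sup (f := fun j => (ts j).depth) (Finset.mem_univ i)
  simp only [depth]
  omega

lemma exists_const (ar : F → ℕ) : ∀ t : Tm F, t.isGround → t.WF ar → ∃ c, ar c = 0
  | var n, hg, _ => absurd hg (Set.singleton_ne_empty n)
  | app f k ts, hg, hwf => by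
      have hwf' : k = ar f ∧ ∀ i, (ts i).WF ar := hwf
      rcases Nat.eq_zero_or_pos k with h0 | hpos
      · exact ⟨f, by omega⟩
      · exact exists_const ar (ts ⟨0, hpos⟩) (ground_app_iff.mp hg _) (hwf'.2 _)

end Tm

lemma eval_subst (I : Interp F Pr) (ρ : ℕ → I.dom) (σ : ℕ → Tm F) :
    ∀ t : Tm F, I.eval ρ (t.subst σ) = I.eval (fun n => I.eval ρ (σ n)) t
  | .var _ => rfl
  | .app f k ts => by
      simp only [Tm.subst, Interp.eval]
      exact congrArg _ (funext fun i => eval_subst I ρ σ (ts i))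

lemma holdsAtom_subst (I : Interp F Pr) (ρ : ℕ → I.dom) (σ : ℕ → Tm F) (A : Atom F Pr) :
    I.holdsAtom ρ (A.subst σ) ↔ I.holdsAtom (fun n => I.eval ρ (σ n)) A := by
  unfold Interp.holdsAtom Atom.subst
  rw [List.map_map]
  have h : (I.eval ρ ∘ Tm.subst σ) = I.eval (fun n => I.eval ρ (σ n)) :=
    funext fun t => eval_subst I ρ σ t
  rw [h]

lemma lhm_closed (ar : F → ℕ) (Pg : Program F Pr) :
    IsHerbrandModelWF ar Pg (leastHerbrandWF ar Pg) := by
  intro C hC σ hσ hbody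
  rw [leastHerbrandWF, Set.mem_sInter]
  intro S hS
  exact hS C hC σ hσ fun B hB => Set.mem_sInter.mp (hbody B hB) S hS

lemma lhm_sound (ar : F → ℕ) (Pg : Program F Pr) (I : Interp F Pr) (hI : I.isModel Pg)
    {B : Atom F Pr} (hB : B ∈ leastHerbrandWF ar Pg) (ρ : ℕ → I.dom) :
    I.holdsAtom ρ B := by
  have hHM : IsHerbrandModelWF ar Pg { X : Atom F Pr | ∀ ρ, I.holdsAtom ρ X } := by
    intro C hC σ hσ hbody ρ'
    rw [holdsAtom_subst]
    exact hI C hC _ (fun X hX => (holdsAtom_subst I ρ' σ X).mp (hbody X hX ρ'))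
  exact Set.mem_sInter.mp hB _ hHM ρ

end Stmt10Helpers

section Stmt10Herb

open Classical

variable {F Pr : Type}

noncomputable def HerbI (ar : F → ℕ) (Pg : Program F Pr) (g : Tm F)
    (hg : g.isGround ∧ g.WF ar) : Interp F Pr where
  dom := {t : Tm F // t.isGround ∧ t.WF ar}
  nonempty := ⟨⟨g, hg⟩⟩
  fn f k ds :=
    if h : k = ar f then
      ⟨Tm.app f k (fun i => (ds i).1),
        Tm.ground_app_iff.mpr fun i => (ds i).2.1,
        h, fun i => (ds i).2.2⟩
    else ⟨g, hg⟩
  rel p ds := (⟨p, ds.map Subtype.val⟩ : Atom F Pr) ∈ leastHerbrandWF ar Pg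

lemma HerbI_eval (ar : F → ℕ) (Pg : Program F Pr) (g : Tm F)
    (hg : g.isGround ∧ g.WF ar) (ρ : ℕ → (HerbI ar Pg g hg).dom) :
    ∀ t : Tm F, t.WF ar →
      ((HerbI ar Pg g hg).eval ρ t).1 = t.subst (fun n => (ρ n).1)
  | .var n, _ => rfl
  | .app f k ts, hwf => by
      have hwf' : k = ar f ∧ ∀ i, (ts i).WF ar := hwf
      show ((HerbI ar Pg g hg).fn f k (fun i => (HerbI ar Pg g hg).eval ρ (ts i))).1 = _
      have hfn : ((HerbI ar Pg g hg).fn f k (fun i => (HerbI ar Pg g hg).eval ρ (ts i))).1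
          = Tm.app f k (fun i => ((HerbI ar Pg g hg).eval ρ (ts i)).1) := by
        show (dite _ _ _ : {t : Tm F // t.isGround ∧ t.WF ar}).1 = _
        rw [dif_pos hwf'.1]
      rw [hfn]
      show _ = Tm.app f k (fun i => (ts i).subst (fun n => (ρ n).1))
      exact congrArg _ (funext fun i => HerbI_eval ar Pg g hg ρ (ts i) (hwf'.2 i))

lemma HerbI_holdsAtom (ar : F → ℕ) (Pg : Program F Pr) (g : Tm F)
    (hg : g.isGround ∧ g.WF ar) (ρ : ℕ → (HerbI ar Pg g hg).dom)
    (A : Atom F Pr) (hA : A.WFA ar) :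
    (HerbI ar Pg g hg).holdsAtom ρ A ↔
      A.subst (fun n => (ρ n).1) ∈ leastHerbrandWF ar Pg := by
  have h : (A.args.map ((HerbI ar Pg g hg).eval ρ)).map Subtype.val
      = A.args.map (Tm.subst (fun n => (ρ n).1)) := by
    erw [List.map_map]
    exact List.map_congr_left fun t ht => HerbI_eval ar Pg g hg ρ t (hA t ht)
  show (⟨A.pred, (A.args.map ((HerbI ar Pg g hg).eval ρ)).map Subtype.val⟩ : Atom F Pr)
      ∈ leastHerbrandWF ar Pg ↔ _
  rw [h]
  exact Iff.rfl

lemma HerbI_isModel (ar : F → ℕ) (Pg : Program F Pr) (g : Tm F)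
    (hg : g.isGround ∧ g.WF ar) (hPwf : ProgramWF ar Pg) :
    (HerbI ar Pg g hg).isModel Pg := by
  intro C hC ρ hbody
  have hwfC := hPwf C hC
  rw [HerbI_holdsAtom ar Pg g hg ρ _ hwfC.1]
  refine lhm_closed ar Pg C hC (fun n => (ρ n).1) (fun n => (ρ n).2) ?_
  intro B hB
  rw [← HerbI_holdsAtom ar Pg g hg ρ _ (hwfC.2 B hB)]
  exact hbody B hB

noncomputable def modI (I : Interp F Pr) (bad : F → Prop) (v : F → I.dom) : Interp F Pr where
  dom := I.dom
  nonempty := I.nonempty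
  fn h k ds := if bad h then v h else I.fn h k ds
  rel := I.rel

lemma modI_eval (I : Interp F Pr) (bad : F → Prop) (v : F → I.dom) (ρ : ℕ → I.dom) :
    ∀ t : Tm F, (∀ h ∈ t.symbols, ¬ bad h) → (modI I bad v).eval ρ t = I.eval ρ t
  | .var _, _ => rfl
  | .app f k ts, hsym => by
      have hf : ¬ bad f := hsym f (Set.mem_union_left _ rfl)
      show (modI I bad v).fn f k (fun i => (modI I bad v).eval ρ (ts i)) = _
      have hfn : ∀ ds, (modI I bad v).fn f k ds = I.fn f k ds := fun ds => if_neg hf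
      rw [hfn]
      exact congrArg _ (funext fun i => modI_eval I bad v ρ (ts i) fun h hh =>
        hsym h (Set.mem_union_right _ (Set.mem_iUnion.mpr ⟨i, hh⟩)))

lemma modI_holdsAtom (I : Interp F Pr) (bad : F → Prop) (v : F → I.dom) (ρ : ℕ → I.dom)
    (A : Atom F Pr) (hA : ∀ h ∈ A.symbols, ¬ bad h) :
    (modI I bad v).holdsAtom ρ A ↔ I.holdsAtom ρ A := by
  unfold Interp.holdsAtom
  have h : A.args.map ((modI I bad v).eval ρ) = A.args.map (I.eval ρ) :=
    List.map_congr_left fun t ht => modI_eval I bad v ρ t fun h hh => hA h ⟨t, ht, hh⟩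
  rw [h]
  exact Iff.rfl

lemma modI_isModel (I : Interp F Pr) (bad : F → Prop) (v : F → I.dom) (Pg : Program F Pr)
    (hI : I.isModel Pg) (hbad : ∀ h, bad h → h ∉ progSymbols Pg) :
    (modI I bad v).isModel Pg := by
  intro C hC ρ hbody
  have key : ∀ X : Atom F Pr, (X = C.head ∨ X ∈ C.body) → ∀ h ∈ X.symbols, ¬ bad h := by
    intro X hX h hh hb
    refine hbad h hb ⟨C, hC, ?_⟩
    rcases hX with rfl | hX
    · exact Set.mem_union_left _ hh
    · exact Set.mem_union_right _ ⟨X, hX, hh⟩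
  rw [modI_holdsAtom I bad v ρ _ (key C.head (Or.inl rfl))]
  exact hI C hC ρ fun B hB => (modI_holdsAtom I bad v ρ _ (key B (Or.inr hB))).mp (hbody B hB)

end Stmt10Herb

section Stmt10Tower

open Classical

variable {F Pr : Type}

def tower (f : F) (a : ℕ) (g0 : Tm F) : ℕ → Tm F
  | 0 => g0
  | n+1 => Tm.app f a (fun _ => tower f a g0 n)

lemma tower_isGround {f : F} {a : ℕ} {g0 : Tm F} (hg : g0.isGround) :
    ∀ n, (tower f a g0 n).isGround
  | 0 => hg
  | n+1 => Tm.ground_app_iff.mpr fun _ => tower_isGround hg n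

lemma tower_WF {ar : F → ℕ} {f : F} {a : ℕ} {g0 : Tm F} (ha : a = ar f) (hg : g0.WF ar) :
    ∀ n, (tower f a g0 n).WF ar
  | 0 => hg
  | n+1 => ⟨ha, fun _ => tower_WF ha hg n⟩

lemma tower_depth {f : F} {a : ℕ} {g0 : Tm F} (ha : 1 ≤ a) :
    ∀ n, (tower f a g0 n).depth = n + g0.depth
  | 0 => by simp [tower]
  | n+1 => by
      haveI : Nonempty (Fin a) := ⟨⟨0, ha⟩⟩
      have hsup : Finset.univ.sup (fun _ : Fin a => (tower f a g0 n).depth)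
          = (tower f a g0 n).depth := Finset.sup_const Finset.univ_nonempty _
      show (Finset.univ.sup fun _ : Fin a => (tower f a g0 n).depth) + 1 = (n+1) + g0.depth
      rw [hsup, tower_depth ha n]
      omega

lemma tower_inj {f : F} {a : ℕ} {g0 : Tm F} (ha : 1 ≤ a) {m n : ℕ}
    (h : tower f a g0 m = tower f a g0 n) : m = n := by
  have := congrArg Tm.depth h
  rw [tower_depth ha, tower_depth ha] at this
  omega

open Classical in
noncomputable def Jint (I : Interp F Pr) (ρ : ℕ → I.dom) (f : F) (a : ℕ) (g0 : Tm F)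
    (D : ℕ) : Interp F Pr where
  dom := I.dom × Tm F
  nonempty := ⟨(Classical.choice I.nonempty, g0)⟩
  fn h k ds :=
    ⟨if hc : h = f ∧ ∃ n, Tm.app h k (fun i => (ds i).2) = tower f a g0 ((n+1)*(D+1))
        then ρ (Classical.choose hc.2)
        else I.fn h k (fun i => (ds i).1),
     Tm.app h k (fun i => (ds i).2)⟩
  rel p ds := I.rel p (ds.map Prod.fst)

variable (I : Interp F Pr) (ρ : ℕ → I.dom) (f : F) (a : ℕ) (g0 : Tm F) (D : ℕ)

lemma Jint_snd (ρJ : ℕ → I.dom × Tm F) :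
    ∀ t : Tm F, t.isGround → ((Jint I ρ f a g0 D).eval ρJ t).2 = t
  | .var n, hg => absurd hg (Set.singleton_ne_empty n)
  | .app h k ts, hg => by
      show Tm.app h k (fun i => ((Jint I ρ f a g0 D).eval ρJ (ts i)).2) = _
      exact congrArg _ (funext fun i =>
        Jint_snd ρJ (ts i) (Tm.ground_app_iff.mp hg i))

lemma Jint_fst_of_not_mem (ρJ : ℕ → I.dom × Tm F) :
    ∀ t : Tm F, f ∉ t.symbols →
      ((Jint I ρ f a g0 D).eval ρJ t).1 = I.eval (fun n => (ρJ n).1) t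
  | .var _, _ => rfl
  | .app h k ts, hf => by
      have hhf : h ≠ f := by
        rintro rfl
        exact hf (Set.mem_union_left _ rfl)
      have hdn : ((Jint I ρ f a g0 D).fn h k
          (fun i => (Jint I ρ f a g0 D).eval ρJ (ts i))).1
          = I.fn h k (fun i => ((Jint I ρ f a g0 D).eval ρJ (ts i)).1) :=
        dif_neg (fun hc => hhf hc.1)
      show ((Jint I ρ f a g0 D).fn h k (fun i => (Jint I ρ f a g0 D).eval ρJ (ts i))).1 = _
      rw [hdn]
      exact congrArg _ (funext fun i => Jint_fst_of_not_mem ρJ (ts i) fun hh =>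
        hf (Set.mem_union_right _ (Set.mem_iUnion.mpr ⟨i, hh⟩)))

lemma Jint_holdsAtom (ρJ : ℕ → I.dom × Tm F) (X : Atom F Pr) (hX : ∀ t ∈ X.args, f ∉ t.symbols) :
    (Jint I ρ f a g0 D).holdsAtom ρJ X ↔ I.holdsAtom (fun n => (ρJ n).1) X := by
  show I.rel X.pred ((X.args.map ((Jint I ρ f a g0 D).eval ρJ)).map Prod.fst) ↔ _
  erw [List.map_map]
  have h : X.args.map (Prod.fst ∘ (Jint I ρ f a g0 D).eval ρJ)
      = X.args.map (I.eval (fun n => (ρJ n).1)) :=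
    List.map_congr_left fun t ht => Jint_fst_of_not_mem I ρ f a g0 D ρJ t (hX t ht)
  rw [h]
  exact Iff.rfl

lemma Jint_isModel (Pg : Program F Pr) (hI : I.isModel Pg) (hf : f ∉ progSymbols Pg) :
    (Jint I ρ f a g0 D).isModel Pg := by
  intro C hC ρJ hbody
  have key : ∀ X : Atom F Pr, (X = C.head ∨ X ∈ C.body) → ∀ t ∈ X.args, f ∉ t.symbols := by
    intro X hX t ht hh
    refine hf ⟨C, hC, ?_⟩
    rcases hX with rfl | hX
    · exact Set.mem_union_left _ ⟨t, ht, hh⟩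
    · exact Set.mem_union_right _ ⟨X, hX, t, ht, hh⟩
  rw [Jint_holdsAtom I ρ f a g0 D ρJ _ (key C.head (Or.inl rfl))]
  exact hI C hC _ fun B hB =>
    (Jint_holdsAtom I ρ f a g0 D ρJ _ (key B (Or.inr hB))).mp (hbody B hB)

lemma tower_spine (ha : 1 ≤ a) (t : Tm F) :
    ∀ m, t.subst (fun n => tower f a g0 ((n+1)*(D+1))) = tower f a g0 m →
      m ≤ t.depth ∨ ∃ v j, j ≤ t.depth ∧ m = (v+1)*(D+1) + j ∧ (j = 0 → t = .var v) := by
  induction t with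
  | var v =>
      intro m h
      right
      have h' : tower f a g0 ((v+1)*(D+1)) = tower f a g0 m := h
      have := tower_inj ha h'
      exact ⟨v, 0, Nat.zero_le _, by omega, fun _ => rfl⟩
  | app h k ts ih =>
      intro m heq
      cases m with
      | zero => exact Or.inl (Nat.zero_le _)
      | succ n =>
          have heq' : Tm.app h k (fun i => (ts i).subst (fun n => tower f a g0 ((n+1)*(D+1))))
              = Tm.app f a (fun _ => tower f a g0 n) := heq
          injection heq' with h1 h2 h3
          subst h1
          subst h2
          have h3' := congrFun (eq_of_heq h3) ⟨0, ha⟩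
          rcases ih ⟨0, ha⟩ n h3' with hle | ⟨v, j, hj, hm, _⟩
          · left
            have := Tm.depth_lt (f := h) (ts := ts) ⟨0, ha⟩
            omega
          · right
            refine ⟨v, j+1, ?_, by omega, fun h0 => absurd h0 j.succ_ne_zero⟩
            have := Tm.depth_lt (f := h) (ts := ts) ⟨0, ha⟩
            omega

lemma subst_eq_tower_var (ha : 1 ≤ a) (t : Tm F) (ht : t.depth ≤ D) (n : ℕ)
    (h : t.subst (fun n => tower f a g0 ((n+1)*(D+1))) = tower f a g0 ((n+1)*(D+1))) :
    t = .var n := by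
  rcases tower_spine f a g0 D ha t _ h with hle | ⟨v, j, hj, hm, hvar⟩
  · exfalso
    have h1 : D+1 ≤ (n+1)*(D+1) := Nat.le_mul_of_pos_left _ (by omega)
    omega
  · have hj' : j ≤ D := le_trans hj ht
    have hjv : j = 0 ∧ n = v := by
      rcases lt_trichotomy n v with h1 | h1 | h1
      · exfalso
        have h3 : (n+1)*(D+1) ≤ v*(D+1) := Nat.mul_le_mul_right _ (by omega)
        have h4 : (v+1)*(D+1) = v*(D+1) + (D+1) := by ring
        omega
      · subst h1
        exact ⟨by omega, rfl⟩
      · exfalso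
        have h3 : (v+2)*(D+1) ≤ (n+1)*(D+1) := Nat.mul_le_mul_right _ (by omega)
        have h4 : (v+2)*(D+1) = (v+1)*(D+1) + (D+1) := by ring
        omega
    rw [hjv.2]
    exact hvar hjv.1

lemma Jint_eval_subst (ha : 1 ≤ a) (hg0 : g0.isGround) (ρJ : ℕ → I.dom × Tm F) (t : Tm F) :
    t.depth ≤ D →
      ((Jint I ρ f a g0 D).eval ρJ (t.subst (fun n => tower f a g0 ((n+1)*(D+1))))).1
        = I.eval ρ t := by
  induction t with
  | var n =>
      intro _
      have hpos : 0 < (n+1)*(D+1) := Nat.mul_pos (Nat.succ_pos n) (Nat.succ_pos D)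
      obtain ⟨M, hMeq⟩ := Nat.exists_eq_succ_of_ne_zero (Nat.pos_iff_ne_zero.mp hpos)
      show ((Jint I ρ f a g0 D).eval ρJ (tower f a g0 ((n+1)*(D+1)))).1 = ρ n
      rw [hMeq]
      show ((Jint I ρ f a g0 D).fn f a
        (fun _ => (Jint I ρ f a g0 D).eval ρJ (tower f a g0 M))).1 = ρ n
      set ds : Fin a → I.dom × Tm F :=
        fun _ => (Jint I ρ f a g0 D).eval ρJ (tower f a g0 M) with hds
      have happ : Tm.app f a (fun i => (ds i).2) = tower f a g0 ((n+1)*(D+1)) := by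
        rw [hMeq]
        show Tm.app f a _ = Tm.app f a (fun _ => tower f a g0 M)
        exact congrArg _ (funext fun i =>
          Jint_snd I ρ f a g0 D ρJ (tower f a g0 M) (tower_isGround hg0 M))
      have hc : f = f ∧ ∃ n', Tm.app f a (fun i => (ds i).2)
          = tower f a g0 ((n'+1)*(D+1)) := ⟨rfl, n, happ⟩
      have h1 : ((Jint I ρ f a g0 D).fn f a ds).1 = ρ (Classical.choose hc.2) :=
        dif_pos hc
      have spec := Classical.choose_spec hc.2
      have htow : tower f a g0 ((n+1)*(D+1))
          = tower f a g0 ((Classical.choose hc.2 + 1)*(D+1)) := happ.symm.trans spec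
      have hnn : Classical.choose hc.2 = n := by
        have := tower_inj ha htow
        have h2 : n + 1 = Classical.choose hc.2 + 1 :=
          Nat.eq_of_mul_eq_mul_right (Nat.succ_pos D) this
        omega
      rw [h1, hnn]
  | app h k ts ih =>
      intro hdep
      show ((Jint I ρ f a g0 D).fn h k (fun i => (Jint I ρ f a g0 D).eval ρJ
        ((ts i).subst (fun n => tower f a g0 ((n+1)*(D+1)))))).1 = _
      set ds : Fin k → I.dom × Tm F := fun i => (Jint I ρ f a g0 D).eval ρJ
        ((ts i).subst (fun n => tower f a g0 ((n+1)*(D+1)))) with hdsdef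
      have hds2 : ∀ i, (ds i).2 = (ts i).subst (fun n => tower f a g0 ((n+1)*(D+1))) :=
        fun i => Jint_snd I ρ f a g0 D ρJ _
          (Tm.subst_isGround (fun n => tower_isGround hg0 _) (ts i))
      have hcond : ¬ (h = f ∧ ∃ n', Tm.app h k (fun i => (ds i).2)
          = tower f a g0 ((n'+1)*(D+1))) := by
        rintro ⟨rfl, n', hn'⟩
        have happ2 : (Tm.app h k ts).subst (fun n => tower h a g0 ((n+1)*(D+1)))
            = tower h a g0 ((n'+1)*(D+1)) := by
          show Tm.app h k (fun i => (ts i).subst (fun n => tower h a g0 ((n+1)*(D+1)))) = _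
          rw [← hn']
          exact congrArg _ (funext fun i => (hds2 i).symm)
        have := subst_eq_tower_var h a g0 D ha _ hdep n' happ2
        cases this
      have h1 : ((Jint I ρ f a g0 D).fn h k ds).1 = I.fn h k (fun i => (ds i).1) :=
        dif_neg hcond
      rw [h1]
      show _ = I.fn h k (fun i => I.eval ρ (ts i))
      refine congrArg _ (funext fun i => ?_)
      refine ih i ?_
      have := Tm.depth_lt (f := h) (ts := ts) i
      omega

end Stmt10Tower

/-- Characterizing answers by `M_P`: if (a) some non-constant function
symbol does not occur in `P`, or (b) for each atom `A` of `Q` with `k` distinct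
variables there are at least `k` constants occurring neither in `P` nor in `A`,
then `M_P ⊨ Q` iff `P ⊨ Q`. -/
theorem stmt_10 {F Pr : Type} (ar : F → ℕ) (Pg : Program F Pr) (Q : Query F Pr)
    (hPwf : ProgramWF ar Pg) (hQwf : QueryWF ar Q)
    (hHU : ∃ g : Tm F, g.isGround ∧ g.WF ar)
    (hcond :
      (∃ f : F, 1 ≤ ar f ∧ f ∉ progSymbols Pg) ∨
      (∀ A ∈ Q, ∃ (k : ℕ) (W : Fin k → ℕ), Function.Injective W ∧
        A.vars = Set.range W ∧
        ∃ c : Fin k → F, Function.Injective c ∧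
          ∀ i, ar (c i) = 0 ∧ c i ∉ progSymbols Pg ∧ c i ∉ A.symbols)) :
    HoldsInMWF ar Pg Q ↔ Entails Pg Q := by
  constructor
  · -- M_P ⊨ Q → P ⊨ Q
    intro hM I hI ρ A hA
    rcases hcond with ⟨f, haf, hfP⟩ | hb
    · -- case (a): non-constant f not in Pg
      obtain ⟨g, hg⟩ := hHU
      obtain ⟨c0, hc0⟩ := Tm.exists_const ar g hg.1 hg.2
      set g0 : Tm F := Tm.app c0 0 (fun i => i.elim0) with hg0def
      have hg0g : g0.isGround := Tm.ground_app_iff.mpr fun i => i.elim0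
      have hg0w : g0.WF ar := ⟨hc0.symm, fun i => i.elim0⟩
      set D : ℕ := (A.args.map Tm.depth).sum + 1 with hDdef
      have hσwf : WFGroundSub ar (fun n => tower f (ar f) g0 ((n+1)*(D+1))) :=
        fun n => ⟨tower_isGround hg0g _, tower_WF rfl hg0w _⟩
      have hAσ := hM _ hσwf A hA
      have hJm : (Jint I ρ f (ar f) g0 D).isModel Pg :=
        Jint_isModel I ρ f (ar f) g0 D Pg hI hfP
      have hholds := lhm_sound ar Pg _ hJm hAσ (fun n => (ρ n, g0))
      have hrel : I.rel (A.subst (fun n => tower f (ar f) g0 ((n+1)*(D+1)))).pred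
          (((A.subst (fun n => tower f (ar f) g0 ((n+1)*(D+1)))).args.map
            ((Jint I ρ f (ar f) g0 D).eval (fun n => (ρ n, g0)))).map Prod.fst) := hholds
      have hmap : ((A.subst (fun n => tower f (ar f) g0 ((n+1)*(D+1)))).args.map
            ((Jint I ρ f (ar f) g0 D).eval (fun n => (ρ n, g0)))).map Prod.fst
          = A.args.map (I.eval ρ) := by
        show ((A.args.map (Tm.subst (fun n => tower f (ar f) g0 ((n+1)*(D+1))))).map _).map _ = _
        erw [List.map_map, List.map_map]
        refine List.map_congr_left fun t ht => ?_
        refine Jint_eval_subst I ρ f (ar f) g0 D haf hg0g _ t ?_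
        have h1 : Tm.depth t ≤ (A.args.map Tm.depth).sum :=
          List.single_le_sum (fun x _ => Nat.zero_le x) _ (List.mem_map_of_mem (f := Tm.depth) ht)
        omega
      rw [hmap] at hrel
      exact hrel
    · -- case (b): fresh constants
      classical
      obtain ⟨k, W, hWinj, hAvars, c, hcinj, hc⟩ := hb A hA
      obtain ⟨g, hg⟩ := hHU
      set σ : ℕ → Tm F := fun n =>
        if h : ∃ i, W i = n then Tm.app (c (Classical.choose h)) 0 (fun j => j.elim0) else g
        with hσdef
      have hσwf : WFGroundSub ar σ := by
        intro n
        by_cases h : ∃ i, W i = n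
        · have hσn : σ n = Tm.app (c (Classical.choose h)) 0 (fun j => j.elim0) := dif_pos h
          rw [hσn]
          exact ⟨Tm.ground_app_iff.mpr fun j => j.elim0, (hc _).1.symm, fun j => j.elim0⟩
        · have hσn : σ n = g := dif_neg h
          rw [hσn]
          exact hg
      have hAσ := hM σ hσwf A hA
      set bad : F → Prop := fun h => ∃ i, c i = h with hbaddef
      set v : F → I.dom := fun h =>
        if hh : ∃ i, c i = h then ρ (W (Classical.choose hh)) else Classical.choice I.nonempty
        with hvdef
      have hIm : (modI I bad v).isModel Pg := by
        refine modI_isModel I bad v Pg hI ?_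
        rintro h ⟨i, hi⟩
        exact hi ▸ (hc i).2.1
      have hholds := lhm_sound ar Pg _ hIm hAσ ρ
      have evb : ∀ t : Tm F, t.vars ⊆ A.vars → t.symbols ⊆ A.symbols →
          (modI I bad v).eval ρ (t.subst σ) = I.eval ρ t := by
        intro t
        induction t with
        | var n =>
            intro hv _
            have hn : n ∈ Set.range W := hAvars ▸ hv rfl
            obtain ⟨i, hi⟩ := hn
            have hex : ∃ i', W i' = n := ⟨i, hi⟩
            have hσn : σ n = Tm.app (c (Classical.choose hex)) 0 (fun j => j.elim0) :=
              dif_pos hex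
            have hii : Classical.choose hex = i := hWinj ((Classical.choose_spec hex).trans hi.symm)
            show (modI I bad v).eval ρ (σ n) = ρ n
            rw [hσn, hii]
            show (modI I bad v).fn (c i) 0 _ = ρ n
            have hbadci : bad (c i) := ⟨i, rfl⟩
            have hfn : (modI I bad v).fn (c i) 0 (fun j =>
                (modI I bad v).eval ρ ((fun j : Fin 0 => j.elim0) j)) = v (c i) := if_pos hbadci
            rw [hfn]
            have hex2 : ∃ i', c i' = c i := ⟨i, rfl⟩
            have hv2 : v (c i) = ρ (W (Classical.choose hex2)) := dif_pos hex2
            rw [hv2, hcinj (Classical.choose_spec hex2), hi]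
        | app h k' ts ih =>
            intro hv hs
            have hh : h ∈ Tm.symbols (Tm.app h k' ts) := Set.mem_union_left _ rfl
            have hnb : ¬ bad h := by
              rintro ⟨i, rfl⟩
              exact (hc i).2.2 (hs hh)
            show (modI I bad v).fn h k' (fun i => (modI I bad v).eval ρ ((ts i).subst σ)) = _
            have hfn : (modI I bad v).fn h k' (fun i => (modI I bad v).eval ρ ((ts i).subst σ))
                = I.fn h k' (fun i => (modI I bad v).eval ρ ((ts i).subst σ)) := if_neg hnb
            rw [hfn]
            show _ = I.fn h k' (fun i => I.eval ρ (ts i))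
            refine congrArg _ (funext fun i => ?_)
            refine ih i (fun x hx => hv (Set.mem_iUnion.mpr ⟨i, hx⟩))
              (fun x hx => hs (Set.mem_union_right _ (Set.mem_iUnion.mpr ⟨i, hx⟩)))
      have hrel : I.rel (A.subst σ).pred ((A.subst σ).args.map ((modI I bad v).eval ρ)) := hholds
      have hmap : (A.subst σ).args.map ((modI I bad v).eval ρ) = A.args.map (I.eval ρ) := by
        show (A.args.map (Tm.subst σ)).map _ = _
        rw [List.map_map]
        refine List.map_congr_left fun t ht => ?_
        exact evb t (fun x hx => ⟨t, ht, hx⟩) (fun x hx => ⟨t, ht, hx⟩)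
      erw [hmap] at hrel
      exact hrel
  · -- P ⊨ Q → M_P ⊨ Q
    intro hE σ hσ A hA
    obtain ⟨g, hg⟩ := hHU
    have hmod := HerbI_isModel ar Pg g hg hPwf
    have h1 := hE (HerbI ar Pg g hg) hmod (fun n => ⟨σ n, hσ n⟩) A hA
    exact (HerbI_holdsAtom ar Pg g hg (fun n => ⟨σ n, hσ n⟩) A (hQwf A hA)).mp h1
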